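/- Let R¹_{m,n} = (z₁w₁)^m (z₂w₂)^n (I z₁ ∂/∂z₁ − I w₁ ∂/∂w₁) and R²_{i,j} = (z₁w₁)^i (z₂w₂)^j (I z₂ ∂/∂z₂ − I w₂ ∂/∂w₂) be planar-rotating vector fields on ℂ⁴. Then for all k, l ∈ {1,2} and all m, n, i, j ≥ 0, the Lie bracket [R^k_{m,n}, R^l_{i,j}] = 0; i.e., the rotating vector fields span an abelian subalgebra. -/

import Mathlib

open MvPolynomial

/-- Polynomials on ℂ⁴ with coordinates (z₁, w₁, z₂, w₂). -/
abbrev Poly4 : Type := MvPolynomial (Fin 4) ℂ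

/-- Polynomial vector fields on ℂ⁴, identified with their component polynomials. -/
abbrev VF : Type := Fin 4 → Poly4

/-- Action of a vector field on a polynomial (as a derivation). -/
noncomputable def vAct (v : VF) (p : Poly4) : Poly4 := ∑ i, v i * pderiv i p

/-- Lie bracket of vector fields, [v,w] = vw − wv as differential operators. -/
noncomputable def vBr (v w : VF) : VF := fun k => vAct v (w k) - vAct w (v k)

/-- The monomial (z₁w₁)^m (z₂w₂)^n, i.e. |z₁|^{2m}|z₂|^{2n}. -/
noncomputable def mon (m n : ℕ) : Poly4 := (X 0 * X 1) ^ m * (X 2 * X 3) ^ n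

/-- Planar-radial vector field P¹_{m,n} = (z₁w₁)^m (z₂w₂)^n (z₁ ∂/∂z₁ + w₁ ∂/∂w₁). -/
noncomputable def P1 (m n : ℕ) : VF := fun k => mon m n * ![X 0, X 1, 0, 0] k

/-- Planar-radial vector field P²_{m,n} = (z₁w₁)^m (z₂w₂)^n (z₂ ∂/∂z₂ + w₂ ∂/∂w₂). -/
noncomputable def P2 (m n : ℕ) : VF := fun k => mon m n * ![0, 0, X 2, X 3] k

/-- Planar-rotating vector field R¹_{m,n} = (z₁w₁)^m (z₂w₂)^n (I z₁ ∂/∂z₁ − I w₁ ∂/∂w₁). -/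
noncomputable def R1 (m n : ℕ) : VF :=
  fun k => mon m n * ![C Complex.I * X 0, -(C Complex.I) * X 1, 0, 0] k

/-- Planar-rotating vector field R²_{m,n} = (z₁w₁)^m (z₂w₂)^n (I z₂ ∂/∂z₂ − I w₂ ∂/∂w₂). -/
noncomputable def R2 (m n : ℕ) : VF :=
  fun k => mon m n * ![0, 0, C Complex.I * X 2, -(C Complex.I) * X 3] k

/-- The family of rotating vector fields, indexed by k ∈ {1,2}. -/
noncomputable def Rk : Fin 2 → ℕ → ℕ → VF := ![R1, R2]

/-!
Each `R^k_{m,n}` is `f • D_k` with `f = (z₁w₁)^m (z₂w₂)^n` and `D_k` a diagonal linear vector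
field `∑ cᵢ xᵢ ∂/∂xᵢ` whose weights on each pair `(z₁, w₁)`, `(z₂, w₂)` sum to zero. Such a field
kills `z₁w₁` and `z₂w₂`, hence every `f`, and any two diagonal linear fields commute. All three
terms of `[f V, g W] = f V(g) W - g W(f) V + f g [V, W]` therefore vanish.
-/

noncomputable def vDer (v : VF) : Derivation ℂ Poly4 Poly4 := ∑ i, v i • pderiv i

theorem vAct_eq_vDer (v : VF) (p : Poly4) : vAct v p = vDer v p := by
  rw [vAct, vDer, ← Derivation.coeFnAddMonoidHom_apply, map_sum, Finset.sum_apply]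
  rfl

theorem vAct_mul (v : VF) (p q : Poly4) : vAct v (p * q) = p * vAct v q + q * vAct v p := by
  simp only [vAct_eq_vDer, Derivation.leibniz, smul_eq_mul]

theorem vAct_pow (v : VF) (p : Poly4) (n : ℕ) : vAct v (p ^ n) = n • p ^ (n - 1) * vAct v p := by
  simp only [vAct_eq_vDer, Derivation.leibniz_pow, smul_eq_mul, smul_mul_assoc]

theorem vAct_C_mul (v : VF) (a : ℂ) (p : Poly4) : vAct v (C a * p) = C a * vAct v p := by
  simp only [vAct, pderiv_C_mul, Finset.mul_sum, mul_left_comm]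

theorem vAct_smul (f : Poly4) (v : VF) (p : Poly4) : vAct (f • v) p = f * vAct v p := by
  simp only [vAct, Pi.smul_apply, smul_eq_mul, Finset.mul_sum, mul_assoc]

theorem vBr_smul_smul (f g : Poly4) (v w : VF) :
    vBr (f • v) (g • w) = (f * vAct v g) • w - (g * vAct w f) • v + (f * g) • vBr v w := by
  funext k
  simp only [vBr, vAct_smul, Pi.smul_apply, smul_eq_mul, vAct_mul, Pi.add_apply, Pi.sub_apply]
  ring

theorem vBr_smul_smul_eq_zero {f g : Poly4} {v w : VF} (hg : vAct v g = 0) (hf : vAct w f = 0)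
    (hvw : vBr v w = 0) : vBr (f • v) (g • w) = 0 := by
  simp [vBr_smul_smul, hg, hf, hvw]

noncomputable def diagField (c : Fin 4 → ℂ) : VF := fun i => C (c i) * X i

theorem diagField_apply (c : Fin 4 → ℂ) (i : Fin 4) : diagField c i = C (c i) * X i := rfl

theorem vAct_diagField_X (c : Fin 4 → ℂ) (i : Fin 4) :
    vAct (diagField c) (X i) = C (c i) * X i := by
  simp [vAct, diagField, pderiv_X, Pi.single_apply]

theorem vBr_diagField (c d : Fin 4 → ℂ) : vBr (diagField c) (diagField d) = 0 := by
  funext k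
  simp only [vBr, diagField_apply, vAct_C_mul, vAct_diagField_X, Pi.zero_apply]
  ring

theorem vAct_diagField_X_mul_X {c : Fin 4 → ℂ} {i j : Fin 4} (h : c i + c j = 0) :
    vAct (diagField c) (X i * X j) = 0 := by
  rw [vAct_mul, vAct_diagField_X, vAct_diagField_X, eq_neg_of_add_eq_zero_left h, C_neg]
  ring

theorem vAct_diagField_mon {c : Fin 4 → ℂ} (h₁ : c 0 + c 1 = 0) (h₂ : c 2 + c 3 = 0) (m n : ℕ) :
    vAct (diagField c) (mon m n) = 0 := by
  simp [mon, vAct_mul, vAct_pow, vAct_diagField_X_mul_X h₁, vAct_diagField_X_mul_X h₂]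

def rotWeights : Fin 2 → Fin 4 → ℂ :=
  ![![Complex.I, -Complex.I, 0, 0], ![0, 0, Complex.I, -Complex.I]]

theorem Rk_eq_smul_diagField (k : Fin 2) (m n : ℕ) :
    Rk k m n = mon m n • diagField (rotWeights k) := by
  funext a
  fin_cases k <;> fin_cases a <;> simp [Rk, R1, R2, rotWeights, diagField]

theorem vAct_diagField_rotWeights_mon (k : Fin 2) (m n : ℕ) :
    vAct (diagField (rotWeights k)) (mon m n) = 0 := by
  fin_cases k <;> exact vAct_diagField_mon (by simp [rotWeights]) (by simp [rotWeights]) m n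

/-- [R^k_{m,n}, R^l_{i,j}] = 0 for all k, l ∈ {1,2}: the rotating vector fields
span an abelian subalgebra. -/
theorem bracket_R_R (k l : Fin 2) (m n i j : ℕ) :
    vBr (Rk k m n) (Rk l i j) = 0 := by
  rw [Rk_eq_smul_diagField, Rk_eq_smul_diagField]
  exact vBr_smul_smul_eq_zero (vAct_diagField_rotWeights_mon k i j) (vAct_diagField_rotWeights_mon l m n)
    (vBr_diagField _ _)
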